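/- arXiv:2411.13688 — 4 statements merged into one kernel-verified Lean document; each statement's English description precedes it below -/
import Mathlib

section
/- Let R be any type and consider a twin neural network given by a featurisation T : R → ℝ^l, an AC-classification head M : ℝ^l → ℝ³, and a PD-classification head sig ∘ Ō with Ō : ℝ^l → ℝ odd, producing predictions ÂC(x,y) = M(max{T(x), T(y)}) (componentwise maximum) and P̂D(x,y) = sig(Ō(T(x) - T(y))). Let the labels AC : R × R → ℝ³ and PD : R × R → ℝ satisfy AC(x,y) = AC(y,x) and PD(x,y) = 1 - PD(y,x) for all x, y. Let w_AC : ℝ³ → ℝ be any weight function and w_PD ∈ ℝ any constant, and define the loss L(x,y) = w_AC(AC(x,y))·H(AC(x,y), ÂC(x,y)) + w_PD·H_bin(PD(x,y), P̂D(x,y)). Then the loss is invariant under swapping the order of the input compounds: L(x,y) = L(y,x) for all x, y ∈ R. -/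
/-- The sigmoid function `sig(x) = eˣ / (eˣ + 1)`. -/
noncomputable def sig (x : ℝ) : ℝ := Real.exp x / (Real.exp x + 1)

/-- Ternary cross-entropy `H(p, q) = -∑ᵢ pᵢ log qᵢ` for `p, q ∈ ℝ³`. -/
noncomputable def crossEntropy (p q : Fin 3 → ℝ) : ℝ := -∑ i, p i * Real.log (q i)

/-- Binary cross-entropy `H_bin(p, q) = -p log q - (1 - p) log (1 - q)`. -/
noncomputable def binCrossEntropy (p q : ℝ) : ℝ :=
  -p * Real.log q - (1 - p) * Real.log (1 - q)

/-- Order-invariance of the twin neural network loss function: with AC prediction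
`ÂC(x,y) = M(max{T x, T y})` (componentwise maximum), PD prediction
`P̂D(x,y) = sig(Ō(T x - T y))` for odd `Ō`, symmetric AC labels, antisymmetric PD labels
(`PD(x,y) = 1 - PD(y,x)`), and the weighted cross-entropy loss
`L(x,y) = w_AC(AC(x,y))·H(AC(x,y), ÂC(x,y)) + w_PD·H_bin(PD(x,y), P̂D(x,y))`,
we have `L(x,y) = L(y,x)` for all input compounds `x, y`. -/
theorem twin_loss_order_invariant {R : Type*} {l : ℕ}
    (T : R → (Fin l → ℝ)) (M : (Fin l → ℝ) → (Fin 3 → ℝ))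
    (O : (Fin l → ℝ) → ℝ) (hO : ∀ v, O (-v) = -O v)
    (AC : R → R → (Fin 3 → ℝ)) (PD : R → R → ℝ)
    (hAC : ∀ x y, AC x y = AC y x) (hPD : ∀ x y, PD x y = 1 - PD y x)
    (wAC : (Fin 3 → ℝ) → ℝ) (wPD : ℝ)
    (L : R → R → ℝ)
    (hL : ∀ x y, L x y =
      wAC (AC x y) * crossEntropy (AC x y) (M (fun i => max (T x i) (T y i)))
        + wPD * binCrossEntropy (PD x y) (sig (O (T x - T y)))) :
    ∀ x y : R, L x y = L y x := by
  intro x y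
  have hsig : ∀ a : ℝ, sig (-a) = 1 - sig a := by
    intro a
    have h1 : Real.exp a + 1 > 0 := by positivity
    simp only [sig, Real.exp_neg]
    field_simp
    ring
  have hbin : ∀ p q : ℝ, binCrossEntropy (1 - p) (1 - q) = binCrossEntropy p q := by
    intro p q
    simp only [binCrossEntropy]
    ring_nf
  have hOeq : O (T x - T y) = -O (T y - T x) := by
    rw [← hO]; congr 1; abel
  have hmax : (fun i => max (T x i) (T y i)) = fun i => max (T y i) (T x i) := by
    funext i; exact max_comm _ _
  rw [hL x y, hL y x, hAC x y, hPD x y, hOeq, hsig, hmax, hbin]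
end

section
/- Let n be a positive integer and let a, b be natural numbers with 2a ≤ n and 2b ≤ n (i.e., no substructure occurs in more than half of the n training compounds). Then a < b if and only if H(a/n) < H(b/n), and a = b if and only if H(a/n) = H(b/n). Hence, under this assumption, the ordering of substructures by training-set frequency coincides exactly with their ordering by empirical information entropy, so Sort & Slice selects precisely the substructures of maximal empirical information entropy. -/
/-- The binary information entropy `H(p) = -p·log₂(p) - (1-p)·log₂(1-p)`.
(In Lean, `Real.logb 2 0 = 0`, so the convention `0 · log₂ 0 = 0` holds automatically.) -/
noncomputable def binEntropy (p : ℝ) : ℝ :=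
  -p * Real.logb 2 p - (1 - p) * Real.logb 2 (1 - p)

lemma binEntropy_eq (p : ℝ) : binEntropy p = Real.binEntropy p / Real.log 2 := by
  unfold binEntropy Real.binEntropy
  rw [Real.log_inv, Real.log_inv]
  unfold Real.logb
  ring

lemma binEntropy_strictMonoOn : StrictMonoOn binEntropy (Set.Icc 0 2⁻¹) := by
  intro x hx y hy hxy
  rw [binEntropy_eq, binEntropy_eq]
  have h2 : (0:ℝ) < Real.log 2 := Real.log_pos (by norm_num)
  exact div_lt_div_of_pos_right (Real.binEntropy_strictMonoOn hx hy hxy) h2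

/-- If no substructure occurs in more than half of the `n` training compounds
(`2a ≤ n` and `2b ≤ n`), then the ordering of substructures by training-set frequency
coincides exactly with their ordering by empirical information entropy:
`a < b ↔ H(a/n) < H(b/n)` and `a = b ↔ H(a/n) = H(b/n)`. -/
theorem frequency_order_iff_entropy_order (n : ℕ) (hn : 0 < n) (a b : ℕ)
    (ha : 2 * a ≤ n) (hb : 2 * b ≤ n) :
    (a < b ↔ binEntropy ((a : ℝ) / n) < binEntropy ((b : ℝ) / n)) ∧
    (a = b ↔ binEntropy ((a : ℝ) / n) = binEntropy ((b : ℝ) / n)) := by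
  have hnr : (0:ℝ) < n := by exact_mod_cast hn
  have mem : ∀ c : ℕ, 2 * c ≤ n → (c : ℝ) / n ∈ Set.Icc (0:ℝ) 2⁻¹ := by
    intro c hc
    constructor
    · positivity
    · rw [div_le_iff₀ hnr]
      have : (2:ℝ) * c ≤ n := by exact_mod_cast hc
      linarith
  have hma := mem a ha
  have hmb := mem b hb
  have key : ∀ c d : ℕ, 2 * c ≤ n → 2 * d ≤ n → c < d →
      binEntropy ((c:ℝ)/n) < binEntropy ((d:ℝ)/n) := by
    intro c d hc hd hcd
    exact binEntropy_strictMonoOn (mem c hc) (mem d hd)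
      (by apply div_lt_div_of_pos_right _ hnr; exact_mod_cast hcd)
  constructor
  · constructor
    · exact key a b ha hb
    · intro h
      by_contra hab
      rcases eq_or_lt_of_le (not_lt.mp hab) with heq | hlt
      · rw [heq] at h; exact lt_irrefl _ h
      · exact absurd h (not_lt.mpr (key b a hb ha hlt).le)
  · constructor
    · intro h; rw [h]
    · intro h
      by_contra hab
      rcases lt_or_gt_of_ne hab with hlt | hlt
      · exact absurd h (ne_of_lt (key a b ha hb hlt))
      · exact absurd h.symm (ne_of_lt (key b a hb ha hlt))
end

section
/- Let G₁ and G₂ be finite graphs with vertex sets V₁ and V₂ and initial node features f₀ : V₁ → X and f̃₀ : V₂ → X, and let f_r, c_r (respectively f̃_r, c̃_r) be the message-passing GNN features and 1-WL colours on G₁ (respectively G₂), both defined with the same functions ψ_r, ⊕_r, h, where each ψ_r : X × Y → X is injective, each ⊕_r : Multiset(X) → Y is injective, and h is injective. Then for every R ∈ ℕ: if the multisets of 1-WL colours at step R differ, i.e. {c_R(a) : a ∈ V₁}_mul ≠ {c̃_R(a) : a ∈ V₂}_mul, then the multisets of GNN node features at layer R differ, i.e. {f_R(a) : a ∈ V₁}_mul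 ≠ {f̃_R(a) : a ∈ V₂}_mul; consequently, for any injective pooling function Ψ : Multiset(X) → ℝ^l, the pooled graph-level embeddings differ: Ψ({f_R(a) : a ∈ V₁}_mul) ≠ Ψ({f̃_R(a) : a ∈ V₂}_mul). That is, a message-passing GNN with injective aggregation, update and pooling distinguishes every pair of graphs that the 1-WL test distinguishes. -/
/-- Message-passing GNN node features: `f 0 = f₀` and
`f (r+1) a = ψ (r+1) (f r a, ⊕_(r+1) {f r ã : ã ∈ N(a)}_mul`. -/
def gnnFeat {V X Y : Type*} [Fintype V] (G : SimpleGraph V) [DecidableRel G.Adj]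
    (f0 : V → X) (ψ : ℕ → X × Y → X) (agg : ℕ → Multiset X → Y) : ℕ → V → X
  | 0 => f0
  | (r + 1) => fun a =>
      ψ (r + 1) (gnnFeat G f0 ψ agg r a,
        agg (r + 1) ((G.neighborFinset a).val.map (gnnFeat G f0 ψ agg r)))

/-- 1-Weisfeiler–Lehman colours: `c 0 = f₀` and
`c (r+1) a = h (c r a, {c r ã : ã ∈ N(a)}_mul)`. -/
def wlColour {V X : Type*} [Fintype V] (G : SimpleGraph V) [DecidableRel G.Adj]
    (f0 : V → X) (h : X × Multiset X → X) : ℕ → V → X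
  | 0 => f0
  | (r + 1) => fun a =>
      h (wlColour G f0 h r a, (G.neighborFinset a).val.map (wlColour G f0 h r))

/-- A message-passing GNN with injective update functions `ψ_r`, injective aggregation
functions `⊕_r` and an injective hash function `h` distinguishes every pair of graphs that
the 1-WL test distinguishes: if the multisets of 1-WL colours at step `R` differ, then the
multisets of GNN node features at layer `R` differ, and consequently for any injective
pooling function `Ψ` the pooled graph-level embeddings differ. -/
theorem gnn_distinguishes_wl_distinguishable_graphs
    {V₁ V₂ X Y : Type*} [Fintype V₁] [Fintype V₂]
    (G₁ : SimpleGraph V₁) [DecidableRel G₁.Adj]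
    (G₂ : SimpleGraph V₂) [DecidableRel G₂.Adj]
    (f0₁ : V₁ → X) (f0₂ : V₂ → X)
    (ψ : ℕ → X × Y → X) (agg : ℕ → Multiset X → Y) (h : X × Multiset X → X)
    (hψ : ∀ r, Function.Injective (ψ r))
    (hagg : ∀ r, Function.Injective (agg r))
    (hh : Function.Injective h)
    {l : ℕ} (Ψ : Multiset X → (Fin l → ℝ)) (hΨ : Function.Injective Ψ)
    (R : ℕ)
    (hcol : (Finset.univ : Finset V₁).val.map (wlColour G₁ f0₁ h R) ≠
            (Finset.univ : Finset V₂).val.map (wlColour G₂ f0₂ h R)) :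
    (Finset.univ : Finset V₁).val.map (gnnFeat G₁ f0₁ ψ agg R) ≠
      (Finset.univ : Finset V₂).val.map (gnnFeat G₂ f0₂ ψ agg R) ∧
    Ψ ((Finset.univ : Finset V₁).val.map (gnnFeat G₁ f0₁ ψ agg R)) ≠
      Ψ ((Finset.univ : Finset V₂).val.map (gnnFeat G₂ f0₂ ψ agg R)) := by
  classical
  have key : ∀ r : ℕ, ∃ θ : X → X,
      (∀ a : V₁, wlColour G₁ f0₁ h r a = θ (gnnFeat G₁ f0₁ ψ agg r a)) ∧
      (∀ a : V₂, wlColour G₂ f0₂ h r a = θ (gnnFeat G₂ f0₂ ψ agg r a)) := by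
    intro r
    induction r with
    | zero => exact ⟨id, fun a => rfl, fun a => rfl⟩
    | succ r ih =>
      obtain ⟨θ, h1, h2⟩ := ih
      by_cases hX : Nonempty X
      · have hY : Nonempty Y := ⟨agg 0 0⟩
        refine ⟨fun x => h (θ (Function.invFun (ψ (r+1)) x).1,
            (Function.invFun (agg (r+1)) (Function.invFun (ψ (r+1)) x).2).map θ), ?_, ?_⟩
        · intro a
          show _ = h _
          rw [show gnnFeat G₁ f0₁ ψ agg (r+1) a = ψ (r+1) (gnnFeat G₁ f0₁ ψ agg r a,
              agg (r+1) ((G₁.neighborFinset a).val.map (gnnFeat G₁ f0₁ ψ agg r))) from rfl]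
          rw [Function.leftInverse_invFun (hψ (r+1)) _]
          simp only
          rw [Function.leftInverse_invFun (hagg (r+1)) _, Multiset.map_map]
          show wlColour G₁ f0₁ h (r+1) a = _
          rw [show wlColour G₁ f0₁ h (r+1) a = h (wlColour G₁ f0₁ h r a,
              (G₁.neighborFinset a).val.map (wlColour G₁ f0₁ h r)) from rfl]
          congr 1
          refine Prod.ext (h1 a) ?_
          simp only
          exact Multiset.map_congr rfl (fun x _ => h1 x)
        · intro a
          show _ = h _
          rw [show gnnFeat G₂ f0₂ ψ agg (r+1) a = ψ (r+1) (gnnFeat G₂ f0₂ ψ agg r a,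
              agg (r+1) ((G₂.neighborFinset a).val.map (gnnFeat G₂ f0₂ ψ agg r))) from rfl]
          rw [Function.leftInverse_invFun (hψ (r+1)) _]
          simp only
          rw [Function.leftInverse_invFun (hagg (r+1)) _, Multiset.map_map]
          show wlColour G₂ f0₂ h (r+1) a = _
          rw [show wlColour G₂ f0₂ h (r+1) a = h (wlColour G₂ f0₂ h r a,
              (G₂.neighborFinset a).val.map (wlColour G₂ f0₂ h r)) from rfl]
          congr 1
          refine Prod.ext (h2 a) ?_
          simp only
          exact Multiset.map_congr rfl (fun x _ => h2 x)
      · refine ⟨θ, fun a => absurd ⟨f0₁ a⟩ hX, fun a => absurd ⟨f0₂ a⟩ hX⟩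
  obtain ⟨θ, h1, h2⟩ := key R
  have main : (Finset.univ : Finset V₁).val.map (gnnFeat G₁ f0₁ ψ agg R) ≠
      (Finset.univ : Finset V₂).val.map (gnnFeat G₂ f0₂ ψ agg R) := by
    intro heq
    apply hcol
    calc (Finset.univ : Finset V₁).val.map (wlColour G₁ f0₁ h R)
        = ((Finset.univ : Finset V₁).val.map (gnnFeat G₁ f0₁ ψ agg R)).map θ := by
          rw [Multiset.map_map]; exact Multiset.map_congr rfl (fun x _ => h1 x)
      _ = ((Finset.univ : Finset V₂).val.map (gnnFeat G₂ f0₂ ψ agg R)).map θ := by rw [heq]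
      _ = (Finset.univ : Finset V₂).val.map (wlColour G₂ f0₂ h R) := by
          rw [Multiset.map_map]; exact (Multiset.map_congr rfl (fun x _ => h2 x)).symm
  exact ⟨main, fun heq => main (hΨ heq)⟩
end

section
/- Let G be a finite graph with vertex set V and initial node features f₀ : V → X, and let f_r and c_r (r ∈ ℕ) be the message-passing GNN features and 1-WL colours on G defined with functions ψ_r, ⊕_r, h, where each ψ_r : X × Y → X is injective, each ⊕_r : Multiset(X) → Y is injective, and h is injective. Then for every r ∈ ℕ there exists a map α_r : X → X such that f_r(a) = α_r(c_r(a)) for all a ∈ V and α_r is injective on the set of attained colours {c_r(a) : a ∈ V}. In particular, at every layer r, vertices with distinct 1-WL colours have distinct GNN feature vectors. -/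
/-- Multisets supported on a set where `f` is injective are determined by their image. -/
lemma multiset_map_injOn {X Z : Type*} {f : X → Z} {S : Set X} (hf : Set.InjOn f S) :
    ∀ s t : Multiset X, (∀ x ∈ s, x ∈ S) → (∀ x ∈ t, x ∈ S) → s.map f = t.map f → s = t := by
  intro s
  induction s using Multiset.induction with
  | empty =>
      intro t _ _ hmap
      simpa [eq_comm, Multiset.map_eq_zero] using hmap.symm
  | cons a s ih =>
      intro t hs ht hmap
      have hfa : f a ∈ t.map f := by
        rw [← hmap]; simp
      obtain ⟨b, hb, hfb⟩ := Multiset.mem_map.mp hfa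
      have hab : b = a := hf (ht b hb) (hs a (Multiset.mem_cons_self a s)) hfb
      subst hab
      obtain ⟨t', rfl⟩ := Multiset.exists_cons_of_mem hb
      have hmap' : s.map f = t'.map f := by
        have := hmap
        simp only [Multiset.map_cons] at this
        exact (Multiset.cons_inj_right _).mp this
      rw [ih t' (fun x hx => hs x (Multiset.mem_cons_of_mem hx))
        (fun x hx => ht x (Multiset.mem_cons_of_mem hx)) hmap']

/-- For a message-passing GNN with injective update, aggregation and hash functions,
at every layer `r` there is a map `α_r` with `f_r(a) = α_r(c_r(a))` for all vertices `a`,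
and `α_r` is injective on the set of attained 1-WL colours. In particular, vertices with
distinct 1-WL colours have distinct GNN feature vectors. -/
theorem gnn_feature_determined_by_wl_colour
    {V X Y : Type*} [Fintype V]
    (G : SimpleGraph V) [DecidableRel G.Adj]
    (f0 : V → X)
    (ψ : ℕ → X × Y → X) (agg : ℕ → Multiset X → Y) (h : X × Multiset X → X)
    (hψ : ∀ r, Function.Injective (ψ r))
    (hagg : ∀ r, Function.Injective (agg r))
    (hh : Function.Injective h) :
    ∀ r : ℕ, ∃ α : X → X,
      (∀ a : V, gnnFeat G f0 ψ agg r a = α (wlColour G f0 h r a)) ∧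
      Set.InjOn α (Set.range (wlColour G f0 h r)) := by
  classical
  intro r
  induction r with
  | zero =>
      refine ⟨id, fun a => rfl, Set.injOn_id _⟩
  | succ r ih =>
      obtain ⟨α, hα1, hα2⟩ := ih
      set f := gnnFeat G f0 ψ agg with hf
      set c := wlColour G f0 h with hc
      -- key: equal colours at level r+1 give equal features at level r+1
      have key : ∀ a b : V, c (r + 1) a = c (r + 1) b → f (r + 1) a = f (r + 1) b := by
        intro a b hcol
        have hcol' : (c r a, (G.neighborFinset a).val.map (c r))
            = (c r b, (G.neighborFinset b).val.map (c r)) := hh hcol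
        have h1 : c r a = c r b := (Prod.mk.injEq _ _ _ _ ▸ hcol').1
        have h2 : (G.neighborFinset a).val.map (c r) = (G.neighborFinset b).val.map (c r) :=
          (Prod.mk.injEq _ _ _ _ ▸ hcol').2
        have hfr : f r a = f r b := by rw [hα1 a, hα1 b, h1]
        have hmul : (G.neighborFinset a).val.map (f r) = (G.neighborFinset b).val.map (f r) := by
          have : ∀ v : V, f r v = α (c r v) := hα1
          calc (G.neighborFinset a).val.map (f r)
              = ((G.neighborFinset a).val.map (c r)).map α := by
                rw [Multiset.map_map]; exact Multiset.map_congr rfl (fun x _ => this x)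
            _ = ((G.neighborFinset b).val.map (c r)).map α := by rw [h2]
            _ = (G.neighborFinset b).val.map (f r) := by
                rw [Multiset.map_map]; exact Multiset.map_congr rfl (fun x _ => (this x).symm)
        show ψ (r + 1) (f r a, agg (r + 1) ((G.neighborFinset a).val.map (f r)))
            = ψ (r + 1) (f r b, agg (r + 1) ((G.neighborFinset b).val.map (f r)))
        rw [hfr, hmul]
      -- reverse: equal features give equal colours
      have rev : ∀ a b : V, f (r + 1) a = f (r + 1) b → c (r + 1) a = c (r + 1) b := by
        intro a b hfeat
        have hfeat' : (f r a, agg (r + 1) ((G.neighborFinset a).val.map (f r)))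
            = (f r b, agg (r + 1) ((G.neighborFinset b).val.map (f r))) := hψ (r + 1) hfeat
        have h1 : f r a = f r b := (Prod.mk.injEq _ _ _ _ ▸ hfeat').1
        have h2 : (G.neighborFinset a).val.map (f r) = (G.neighborFinset b).val.map (f r) :=
          hagg (r + 1) ((Prod.mk.injEq _ _ _ _ ▸ hfeat').2)
        have hc1 : c r a = c r b := by
          apply hα2 ⟨a, rfl⟩ ⟨b, rfl⟩
          rw [← hα1 a, ← hα1 b, h1]
        have hc2 : (G.neighborFinset a).val.map (c r) = (G.neighborFinset b).val.map (c r) := by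
          apply multiset_map_injOn hα2
          · intro x hx
            obtain ⟨v, _, rfl⟩ := Multiset.mem_map.mp hx
            exact ⟨v, rfl⟩
          · intro x hx
            obtain ⟨v, _, rfl⟩ := Multiset.mem_map.mp hx
            exact ⟨v, rfl⟩
          · have e1 : (G.neighborFinset a).val.map (f r)
                = ((G.neighborFinset a).val.map (c r)).map α := by
              rw [Multiset.map_map]; exact Multiset.map_congr rfl (fun x _ => hα1 x)
            have e2 : (G.neighborFinset b).val.map (f r)
                = ((G.neighborFinset b).val.map (c r)).map α := by
              rw [Multiset.map_map]; exact Multiset.map_congr rfl (fun x _ => hα1 x)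
            rw [← e1, ← e2, h2]
        show h (c r a, (G.neighborFinset a).val.map (c r))
            = h (c r b, (G.neighborFinset b).val.map (c r))
        rw [hc1, hc2]
      refine ⟨fun x => if hx : ∃ a : V, c (r + 1) a = x then f (r + 1) hx.choose else x,
        ?_, ?_⟩
      · intro a
        have hx : ∃ b : V, c (r + 1) b = c (r + 1) a := ⟨a, rfl⟩
        simp only [dif_pos hx]
        exact (key _ _ hx.choose_spec).symm
      · rintro x ⟨a, rfl⟩ y ⟨b, rfl⟩ hxy
        have hx : ∃ v : V, c (r + 1) v = c (r + 1) a := ⟨a, rfl⟩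
        have hy : ∃ v : V, c (r + 1) v = c (r + 1) b := ⟨b, rfl⟩
        simp only [dif_pos hx, dif_pos hy] at hxy
        have hfa : f (r + 1) a = f (r + 1) b :=
          (key _ _ hx.choose_spec).symm.trans (hxy.trans (key _ _ hy.choose_spec))
        exact rev a b hfa
end
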